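/- Let G be a finite simple graph on n vertices and let k be an integer with 1 ≤ k ≤ n. Then there exists a fractional CB-partition of G using fewer than 2^k·n/k complete bipartite subgraphs of G, each with weight 1/2 or 1, such that the load of every vertex is at most 2^(k−2) + ⌈n/k⌉/2. -/

import Mathlib

/-- A complete bipartite subgraph of a simple graph `G`, determined by two disjoint
nonempty finsets `A`, `B` of vertices such that every pair `{a, b}` with `a ∈ A`,
`b ∈ B` is an edge of `G`. -/
structure CBSub {V : Type*} [DecidableEq V] (G : SimpleGraph V) where
  A : Finset V
  B : Finset V
  nonemptyA : A.Nonempty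
  nonemptyB : B.Nonempty
  disjointAB : Disjoint A B
  adj : ∀ a ∈ A, ∀ b ∈ B, G.Adj a b

namespace CBSub

variable {V : Type*} [DecidableEq V] {G : SimpleGraph V}

/-- The vertex set of a complete bipartite subgraph. -/
def verts (H : CBSub G) : Finset V := H.A ∪ H.B

/-- The edge set of a complete bipartite subgraph: all pairs `{a, b}` with
`a ∈ A`, `b ∈ B`. -/
def edges (H : CBSub G) : Finset (Sym2 V) := (H.A ×ˢ H.B).image fun ab => s(ab.1, ab.2)

end CBSub

/-!
Cut the vertex set into blocks of `k` consecutive vertices. For a block `B` and a vertex `u`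
put `N_B(u) = N(u) ∩ B`; for every nonempty set `A` of this form take the biclique between `A`
and the class of vertices `u` with `N_B(u) = A`. An edge `uv` lies in exactly two of these
bicliques, one coming from the block of `u` and one from the block of `v`, so weight `1/2` on
each gives a fractional CB-partition. A block of size `s ≤ k` yields at most
`2^s - 1 < 2^k s / k` bicliques. A vertex `v` lies on the `A`-side only of bicliques of its own
block with `v ∈ A` (at most `2^(k-1)`), and on the other side of at most one biclique per block.
-/

open Finset

namespace CBSub

variable {V : Type*} [DecidableEq V] {G : SimpleGraph V} (H : CBSub G)

lemma mem_verts {v : V} : v ∈ H.verts ↔ v ∈ H.A ∨ v ∈ H.B := mem_union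

lemma mk_mem_edges {u v : V} :
    s(u, v) ∈ H.edges ↔ u ∈ H.A ∧ v ∈ H.B ∨ v ∈ H.A ∧ u ∈ H.B := by
  simp only [edges, mem_image, mem_product, Prod.exists, Sym2.eq_iff]
  constructor
  · rintro ⟨a, b, ⟨ha, hb⟩, ⟨rfl, rfl⟩ | ⟨rfl, rfl⟩⟩
    exacts [Or.inl ⟨ha, hb⟩, Or.inr ⟨ha, hb⟩]
  · rintro (⟨hu, hv⟩ | ⟨hv, hu⟩)
    exacts [⟨u, v, ⟨hu, hv⟩, Or.inl ⟨rfl, rfl⟩⟩, ⟨v, u, ⟨hv, hu⟩, Or.inr ⟨rfl, rfl⟩⟩]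

end CBSub

lemma Finset.card_filter_equivFin_symm {α : Type*} (T : Finset α) (P : α → Prop)
    [DecidablePred P] : #{j : Fin #T | P (T.equivFin.symm j)} = #{p ∈ T | P p} := by
  simp only [card_filter]
  rw [Equiv.sum_comp T.equivFin.symm fun p : T => if P p then 1 else 0]
  exact sum_coe_sort T fun p => if P p then 1 else 0

lemma Nat.mul_two_pow_le_mul_two_pow {s k : ℕ} (hs : 1 ≤ s) (hsk : s ≤ k) :
    k * 2 ^ s ≤ s * 2 ^ k := by
  induction k, hsk using Nat.le_induction with
  | base => rfl
  | succ k hsk ih =>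
    calc (k + 1) * 2 ^ s ≤ 2 * (k * 2 ^ s) := by nlinarith [Nat.one_le_two_pow (n := s)]
      _ ≤ s * 2 ^ (k + 1) := by rw [pow_succ]; nlinarith

namespace SimpleGraph

variable {V ι : Type*} [Fintype V] [DecidableEq ι] (G : SimpleGraph V) [DecidableRel G.Adj]
  (b : V → ι)

def blockNeighbors (i : ι) (u : V) : Finset V := {a | G.Adj u a ∧ b a = i}

def blockKey (u v : V) : ι × Finset V := (b u, G.blockNeighbors b (b u) v)

variable {G b}

@[simp]
lemma mem_blockNeighbors {i : ι} {u a : V} :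
    a ∈ G.blockNeighbors b i u ↔ G.Adj u a ∧ b a = i := by
  simp [blockNeighbors]

lemma blockKey_ne_swap {u v : V} (huv : G.Adj u v) : G.blockKey b u v ≠ G.blockKey b v u := by
  intro h
  have hu : u ∈ G.blockNeighbors b (b u) v := mem_blockNeighbors.2 ⟨huv.symm, rfl⟩
  rw [show G.blockNeighbors b (b u) v = G.blockNeighbors b (b v) u from congrArg Prod.snd h] at hu
  exact G.irrefl (mem_blockNeighbors.1 hu).1

variable [DecidableEq V] (G b)

def blockTwins (i : ι) (A : Finset V) : Finset V := {u | G.blockNeighbors b i u = A}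

-- Keys are read off edges, so that both sides of every biclique are nonempty.
def blockKeys : Finset (ι × Finset V) :=
  ({uv | G.Adj uv.1 uv.2} : Finset (V × V)).image fun uv => G.blockKey b uv.1 uv.2

variable {G b}

@[simp]
lemma mem_blockTwins {i : ι} {A : Finset V} {u : V} :
    u ∈ G.blockTwins b i A ↔ G.blockNeighbors b i u = A := by
  simp [blockTwins]

lemma mem_blockKeys {p : ι × Finset V} :
    p ∈ G.blockKeys b ↔ ∃ u v, G.Adj u v ∧ G.blockKey b u v = p := by
  simp [blockKeys]

lemma blockKey_mem_blockKeys {u v : V} (huv : G.Adj u v) : G.blockKey b u v ∈ G.blockKeys b :=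
  mem_blockKeys.2 ⟨u, v, huv, rfl⟩

lemma snd_nonempty_of_mem_blockKeys {p : ι × Finset V} (hp : p ∈ G.blockKeys b) :
    p.2.Nonempty := by
  obtain ⟨u, v, huv, rfl⟩ := mem_blockKeys.1 hp
  exact ⟨u, mem_blockNeighbors.2 ⟨huv.symm, rfl⟩⟩

lemma snd_subset_of_mem_blockKeys {p : ι × Finset V} (hp : p ∈ G.blockKeys b) :
    p.2 ⊆ ({a | b a = p.1} : Finset V) := by
  obtain ⟨u, v, -, rfl⟩ := mem_blockKeys.1 hp
  intro a ha
  exact mem_filter.2 ⟨mem_univ a, (mem_blockNeighbors.1 ha).2⟩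

variable (G b)

def blockBiclique (p : G.blockKeys b) : CBSub G where
  A := p.1.2
  B := G.blockTwins b p.1.1 p.1.2
  nonemptyA := snd_nonempty_of_mem_blockKeys p.2
  nonemptyB := by
    obtain ⟨u, v, -, hp⟩ := mem_blockKeys.1 p.2
    exact ⟨v, mem_blockTwins.2 (hp ▸ rfl)⟩
  disjointAB := by
    refine Finset.disjoint_left.2 fun a haA haB => ?_
    rw [mem_blockTwins] at haB
    exact G.irrefl (mem_blockNeighbors.1 (haB ▸ haA)).1
  adj a haA c hcB := by
    rw [mem_blockTwins] at hcB
    exact (mem_blockNeighbors.1 (hcB ▸ haA)).1.symm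

variable {G b}

lemma mem_verts_blockBiclique {p : G.blockKeys b} {v : V} :
    v ∈ (G.blockBiclique b p).verts ↔ v ∈ p.1.2 ∨ v ∈ G.blockTwins b p.1.1 p.1.2 :=
  CBSub.mem_verts _

lemma mk_mem_edges_blockBiclique {u v : V} (huv : G.Adj u v) (p : G.blockKeys b) :
    s(u, v) ∈ (G.blockBiclique b p).edges ↔
      p.1 = G.blockKey b u v ∨ p.1 = G.blockKey b v u := by
  have key {x y : V} (hxy : G.Adj x y) :
      x ∈ p.1.2 ∧ y ∈ G.blockTwins b p.1.1 p.1.2 ↔ p.1 = G.blockKey b x y := by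
    obtain ⟨i, A⟩ := p.1
    simp only [mem_blockTwins, blockKey, Prod.ext_iff]
    constructor
    · rintro ⟨hx, rfl⟩
      exact ⟨(mem_blockNeighbors.1 hx).2.symm, (mem_blockNeighbors.1 hx).2 ▸ rfl⟩
    · rintro ⟨rfl, rfl⟩
      exact ⟨mem_blockNeighbors.2 ⟨hxy.symm, rfl⟩, rfl⟩
  exact (CBSub.mk_mem_edges _).trans (or_congr (key huv) (key huv.symm))

lemma card_filter_blockKeys_eq_blockKey {u v : V} (huv : G.Adj u v) :
    #{p ∈ G.blockKeys b | p = G.blockKey b u v ∨ p = G.blockKey b v u} = 2 := by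
  rw [filter_or, filter_eq', filter_eq', if_pos (blockKey_mem_blockKeys huv),
    if_pos (blockKey_mem_blockKeys huv.symm)]
  exact card_pair (blockKey_ne_swap huv)

lemma card_filter_blockKeys_mem_le {k : ℕ} (hb : ∀ i, #{a | b a = i} ≤ k) (v : V) :
    #{p ∈ G.blockKeys b | v ∈ p.2} ≤ 2 ^ (k - 1) := by
  have hblock {p} (hp : p ∈ {p ∈ G.blockKeys b | v ∈ p.2}) :
      b v = p.1 ∧ p.2 ⊆ ({a | b a = b v} : Finset V) := by
    obtain ⟨hpK, hv⟩ := mem_filter.1 hp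
    have hsub := snd_subset_of_mem_blockKeys hpK
    have hbv : b v = p.1 := by simpa using hsub hv
    exact ⟨hbv, hbv ▸ hsub⟩
  calc #{p ∈ G.blockKeys b | v ∈ p.2}
      ≤ #(({a | b a = b v} : Finset V).erase v).powerset := by
        refine card_le_card_of_injOn (fun p => p.2.erase v) (fun p hp => ?_)
          fun p hp q hq h => ?_
        · exact mem_powerset.2 (erase_subset_erase v (hblock hp).2)
        · refine Prod.ext ((hblock hp).1.symm.trans (hblock hq).1) ?_
          rw [← insert_erase (mem_filter.1 hp).2, show p.2.erase v = q.2.erase v from h,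
            insert_erase (mem_filter.1 hq).2]
    _ = 2 ^ (#{a | b a = b v} - 1) := by rw [card_powerset, card_erase_of_mem (by simp)]
    _ ≤ 2 ^ (k - 1) := Nat.pow_le_pow_right two_pos (Nat.sub_le_sub_right (hb _) 1)

lemma card_filter_blockKeys_mem_blockTwins_le (v : V) :
    #{p ∈ G.blockKeys b | v ∈ G.blockTwins b p.1 p.2} ≤ #(univ.image b) := by
  refine card_le_card_of_injOn Prod.fst (fun p hp => ?_) fun p hp q hq h => ?_
  · obtain ⟨u, w, -, rfl⟩ := mem_blockKeys.1 (mem_filter.1 hp).1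
    exact mem_image_of_mem b (mem_univ u)
  · have hp' := mem_blockTwins.1 (mem_filter.1 hp).2
    have hq' := mem_blockTwins.1 (mem_filter.1 hq).2
    exact Prod.ext h (hp'.symm.trans (h ▸ hq'))

lemma card_blockKeys_le :
    #(G.blockKeys b) ≤ ∑ i ∈ univ.image b, (2 ^ #{a | b a = i} - 1) := by
  rw [card_eq_sum_card_fiberwise (f := Prod.fst) fun p hp => ?_]
  · refine sum_le_sum fun i _ => ?_
    calc #{p ∈ G.blockKeys b | p.1 = i}
        ≤ #((({a | b a = i} : Finset V).powerset).erase ∅) := by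
          refine card_le_card_of_injOn Prod.snd (fun p hp => ?_) fun p hp q hq h => ?_
          · obtain ⟨hpK, rfl⟩ := mem_filter.1 hp
            exact mem_erase.2 ⟨(snd_nonempty_of_mem_blockKeys hpK).ne_empty,
              mem_powerset.2 (snd_subset_of_mem_blockKeys hpK)⟩
          · exact Prod.ext ((mem_filter.1 hp).2.trans (mem_filter.1 hq).2.symm) h
      _ = 2 ^ #{a | b a = i} - 1 := by
          rw [card_erase_of_mem (empty_mem_powerset _), card_powerset]
  · obtain ⟨u, w, -, rfl⟩ := mem_blockKeys.1 hp
    exact mem_image_of_mem b (mem_univ u)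

lemma mul_card_blockKeys_lt [Nonempty V] {k : ℕ} (hb : ∀ i, #{a | b a = i} ≤ k) :
    k * #(G.blockKeys b) < 2 ^ k * Fintype.card V := by
  calc k * #(G.blockKeys b) ≤ ∑ i ∈ univ.image b, k * (2 ^ #{a | b a = i} - 1) := by
        rw [← mul_sum]; exact Nat.mul_le_mul_left k card_blockKeys_le
    _ < ∑ i ∈ univ.image b, #{a | b a = i} * 2 ^ k := by
        refine sum_lt_sum_of_nonempty (univ_nonempty.image b) fun i hi => ?_
        obtain ⟨u, -, rfl⟩ := mem_image.1 hi
        have hs : 1 ≤ #{a | b a = b u} := card_pos.2 ⟨u, by simp⟩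
        calc k * (2 ^ #{a | b a = b u} - 1) < k * 2 ^ #{a | b a = b u} :=
              Nat.mul_lt_mul_of_pos_left (Nat.sub_lt (Nat.two_pow_pos _) one_pos)
                (hs.trans (hb _))
          _ ≤ #{a | b a = b u} * 2 ^ k := Nat.mul_two_pow_le_mul_two_pow hs (hb _)
    _ = 2 ^ k * Fintype.card V := by
        rw [← sum_mul, ← card_eq_sum_card_image, card_univ, mul_comm]


lemma card_filter_blockKeys_mem_verts_le {k : ℕ} (hb : ∀ i, #{a | b a = i} ≤ k) (v : V) :
    #{p ∈ G.blockKeys b | v ∈ p.2 ∨ v ∈ G.blockTwins b p.1 p.2} ≤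
      2 ^ (k - 1) + #(univ.image b) := by
  rw [filter_or]
  exact (card_union_le _ _).trans
    (add_le_add (card_filter_blockKeys_mem_le hb v) (card_filter_blockKeys_mem_blockTwins_le v))

end SimpleGraph

lemma Fin.card_filter_div_eq_le {n k : ℕ} (hk : 0 < k) (i : ℕ) :
    #{v : Fin n | (v : ℕ) / k = i} ≤ k := by
  refine (card_le_card_of_injOn (fun v : Fin n => (v : ℕ) % k) (t := range k)
    (fun v _ => mem_range.2 (Nat.mod_lt _ hk)) fun v hv w hw h => ?_).trans (card_range k).le
  have hv' : (v : ℕ) / k = i := (mem_filter.1 hv).2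
  have hw' : (w : ℕ) / k = i := (mem_filter.1 hw).2
  exact Fin.ext <| by
    rw [← Nat.div_add_mod v k, ← Nat.div_add_mod w k, hv', hw', show (v : ℕ) % k = w % k from h]

lemma Fin.card_image_div_le_ceil {n k : ℕ} (hk : 0 < k) :
    #(univ.image fun v : Fin n => (v : ℕ) / k) ≤ ⌈(n : ℝ) / k⌉₊ := by
  refine (card_le_card fun i hi => ?_).trans (card_range _).le
  obtain ⟨v, -, rfl⟩ := mem_image.1 hi
  refine mem_range.2 (Nat.lt_ceil.2 (Nat.cast_div_le.trans_lt ?_))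
  exact div_lt_div_of_pos_right (by exact_mod_cast v.isLt) (by exact_mod_cast hk)

/-- **Lemma (fractional part).**  Let `G` be a graph on `n` vertices and
`1 ≤ k ≤ n`.  There is a fractional CB-partition of `G` using fewer than
`2^k · n / k` complete bipartite subgraphs of `G`, each with weight `1/2` or `1`,
such that the load of every vertex is at most `2^(k-2) + ⌈n/k⌉ / 2`. -/
theorem lemma_k_fractional (n k : ℕ) (hk1 : 1 ≤ k) (hkn : k ≤ n)
    (G : SimpleGraph (Fin n)) :
    ∃ (M : ℕ) (f : Fin M → CBSub G) (w : Fin M → ℝ),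
      ((M : ℝ) < 2 ^ k * n / k) ∧
      (∀ i, w i = 1 / 2 ∨ w i = 1) ∧
      (∀ e ∈ G.edgeSet,
        ∑ i ∈ Finset.univ.filter (fun i : Fin M => e ∈ (f i).edges), w i = 1) ∧
      ∀ v : Fin n,
        ∑ i ∈ Finset.univ.filter (fun i : Fin M => v ∈ (f i).verts), w i ≤
          (2 : ℝ) ^ ((k : ℤ) - 2) + (⌈(n : ℝ) / k⌉₊ : ℝ) / 2 := by
  classical
  have hk : 0 < k := hk1
  have : Nonempty (Fin n) := ⟨⟨0, by omega⟩⟩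
  set b : Fin n → ℕ := fun v => (v : ℕ) / k
  set T := G.blockKeys b
  refine ⟨#T, fun j => G.blockBiclique b (T.equivFin.symm j), fun _ => 1 / 2, ?_,
    fun _ => Or.inl rfl, ?_, ?_⟩
  · rw [lt_div_iff₀ (by exact_mod_cast hk), mul_comm]
    exact_mod_cast Fintype.card_fin n ▸ G.mul_card_blockKeys_lt (Fin.card_filter_div_eq_le hk)
  · rintro ⟨u, v⟩ huv
    simp_rw [SimpleGraph.mk_mem_edges_blockBiclique huv]
    rw [sum_const, card_filter_equivFin_symm T
      (fun p => p = G.blockKey b u v ∨ p = G.blockKey b v u),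
      SimpleGraph.card_filter_blockKeys_eq_blockKey huv]
    norm_num
  · intro v
    simp_rw [SimpleGraph.mem_verts_blockBiclique]
    rw [sum_const, card_filter_equivFin_symm T
      (fun p => v ∈ p.2 ∨ v ∈ G.blockTwins b p.1 p.2), nsmul_eq_mul]
    have hcard : (#{p ∈ T | v ∈ p.2 ∨ v ∈ G.blockTwins b p.1 p.2} : ℝ) ≤
        2 ^ (k - 1) + ⌈(n : ℝ) / k⌉₊ := by
      exact_mod_cast (SimpleGraph.card_filter_blockKeys_mem_verts_le
        (Fin.card_filter_div_eq_le hk) v).trans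
          (Nat.add_le_add_left (Fin.card_image_div_le_ceil hk) _)
    have hpow : (2 : ℝ) ^ ((k : ℤ) - 2) = 2 ^ (k - 1) / 2 := by
      rw [show (k : ℤ) - 2 = ((k - 1 : ℕ) : ℤ) - 1 by omega, zpow_sub₀ two_ne_zero, zpow_natCast,
        zpow_one]
    rw [hpow]
    linarith
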